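/- Let G be a group, K a subgroup, and σ a k[K]-module for a field k. Then End_{k[G]}(c-Ind_K^G σ) is isomorphic as a k-vector space to ⊕_{t ∈ K\G/K} Hom_{k[K]}(σ, σ(t)), where σ(t) is the subspace of c-Ind_K^G(σ) of functions supported on the double coset KtK. -/

import Mathlib

variable (k : Type) [CommRing k] {G : Type} [Group G] (K : Subgroup G)
  {V : Type} [AddCommGroup V] [Module k V]

/-- The defining property of elements of the compact induction `c-Ind_K^G σ`:
`K`-equivariant functions `G → V` supported on finitely many right cosets `Kg`. -/
def IsCIndFn (ρ : Representation k ↥K V) (f : G → V) : Prop :=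
  (∀ (h : ↥K) (g : G), f (↑h * g) = ρ h (f g)) ∧
    Set.Finite (Quotient.mk (QuotientGroup.rightRel K) '' {g : G | f g ≠ 0})

/-- Compact induction `c-Ind_K^G σ` as a `k`-submodule of `G → V`. -/
def cInd (ρ : Representation k ↥K V) : Submodule k (G → V) where
  carrier := {f | IsCIndFn k K ρ f}
  add_mem' := by
    rintro f g ⟨hf1, hf2⟩ ⟨hg1, hg2⟩
    refine ⟨fun h x => by simp [hf1, hg1], ?_⟩
    refine Set.Finite.subset (hf2.union hg2) ?_
    rw [← Set.image_union]
    refine Set.image_mono ?_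
    intro x hx
    by_contra hc
    simp only [Set.mem_union, Set.mem_setOf_eq, not_or, not_not] at hc
    exact hx (by simp [Pi.add_apply, hc.1, hc.2])
  zero_mem' := ⟨fun h g => by simp, by simp⟩
  smul_mem' := by
    rintro c f ⟨hf1, hf2⟩
    refine ⟨fun h x => by simp [hf1], ?_⟩
    refine hf2.subset (Set.image_mono ?_)
    intro x hx h0
    exact hx (by simp [h0])

theorem cInd_translate_mem (ρ : Representation k ↥K V) (g : G) (f : G → V)
    (hf : f ∈ cInd k K ρ) : (fun x => f (x * g)) ∈ cInd k K ρ := by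
  obtain ⟨h1, h2⟩ := hf
  constructor
  · intro h x
    show f (↑h * x * g) = _
    rw [mul_assoc]
    exact h1 h (x * g)
  · have hresp : ∀ a b : G, (QuotientGroup.rightRel K) a b →
        (Quotient.mk (QuotientGroup.rightRel K) (a * g⁻¹) : Quotient (QuotientGroup.rightRel K))
          = Quotient.mk (QuotientGroup.rightRel K) (b * g⁻¹) := by
      intro a b hab
      refine Quotient.sound ?_
      have hab' : b * a⁻¹ ∈ K := QuotientGroup.rightRel_apply.mp hab
      refine QuotientGroup.rightRel_apply.mpr ?_
      simpa [mul_assoc] using hab'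
    have key : Quotient.mk (QuotientGroup.rightRel K) '' {x : G | f (x * g) ≠ 0}
        ⊆ (Quotient.lift (fun y : G => Quotient.mk (QuotientGroup.rightRel K) (y * g⁻¹)) hresp) ''
          (Quotient.mk (QuotientGroup.rightRel K) '' {y : G | f y ≠ 0}) := by
      rintro q ⟨x, hx, rfl⟩
      exact ⟨Quotient.mk _ (x * g), ⟨x * g, hx, rfl⟩, by simp⟩
    exact ((h2.image _).subset key)

/-- The representation of `G` on `c-Ind_K^G σ` by right translation. -/
def cIndRep (ρ : Representation k ↥K V) : Representation k G ↥(cInd k K ρ) where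
  toFun g :=
    { toFun := fun f => ⟨fun x => (f : G → V) (x * g), cInd_translate_mem k K ρ g _ f.2⟩
      map_add' := fun f₁ f₂ => Subtype.ext (funext fun x => rfl)
      map_smul' := fun c f => Subtype.ext (funext fun x => rfl) }
  map_one' := LinearMap.ext fun f => Subtype.ext (funext fun x => by simp)
  map_mul' := fun g₁ g₂ => LinearMap.ext fun f => Subtype.ext (funext fun x => by
    simp [mul_assoc])

/-- Functoriality of compact induction in the coefficient representation. -/
def cIndMap {W : Type} [AddCommGroup W] [Module k W]
    (ρ : Representation k ↥K V) (ρ' : Representation k ↥K W)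
    (φ : V →ₗ[k] W) (hφ : ∀ (h : ↥K) (v : V), φ (ρ h v) = ρ' h (φ v)) :
    ↥(cInd k K ρ) →ₗ[k] ↥(cInd k K ρ') where
  toFun f := ⟨fun x => φ ((f : G → V) x), by
    obtain ⟨h1, h2⟩ := f.2
    constructor
    · intro h x
      show φ ((f : G → V) (↑h * x)) = _
      rw [h1, hφ]
    · refine h2.subset (Set.image_mono ?_)
      intro x hx h0
      exact hx (by simp [h0])⟩
  map_add' f₁ f₂ := Subtype.ext (funext fun x => by simp)
  map_smul' c f := Subtype.ext (funext fun x => by simp)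

/-- The subspace `σ(t)` of `c-Ind_K^G σ` of functions supported on the double coset
indexed by `q ∈ K\G/K`. -/
def dosetPart (ρ : Representation k ↥K V) (q : DoubleCoset.Quotient (↑K : Set G) ↑K) :
    Submodule k ↥(cInd k K ρ) where
  carrier := {f | ∀ x : G, (f : G → V) x ≠ 0 → Quotient.mk (DoubleCoset.setoid ↑K ↑K) x = q}
  add_mem' := by
    intro f g hf hg x hx
    by_cases h1 : (f : G → V) x ≠ 0
    · exact hf x h1
    · push_neg at h1
      refine hg x ?_
      intro h2
      exact hx (by simp [Submodule.coe_add, Pi.add_apply, h1, h2])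
  zero_mem' := by intro x hx; simp at hx
  smul_mem' := by
    intro c f hf x hx
    refine hf x ?_
    intro h0
    exact hx (by simp [h0])

/-- The space `Hom_K(σ, σ(q))` of `K`-equivariant maps from `σ` into the functions
supported on the double coset `q`. -/
def homKPart (ρ : Representation k ↥K V) (q : DoubleCoset.Quotient (↑K : Set G) ↑K) :
    Submodule k (V →ₗ[k] ↥(cInd k K ρ)) where
  carrier := {φ | (∀ v : V, φ v ∈ dosetPart k K ρ q) ∧
    ∀ (h : ↥K) (v : V), φ (ρ h v) = cIndRep k K ρ ↑h (φ v)}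
  add_mem' := by
    rintro φ ψ ⟨hφ1, hφ2⟩ ⟨hψ1, hψ2⟩
    exact ⟨fun v => (dosetPart k K ρ q).add_mem (hφ1 v) (hψ1 v),
      fun h v => by simp [hφ2 h v, hψ2 h v]⟩
  zero_mem' := ⟨fun v => (dosetPart k K ρ q).zero_mem, fun h v => by simp⟩
  smul_mem' := by
    rintro c φ ⟨hφ1, hφ2⟩
    exact ⟨fun v => (dosetPart k K ρ q).smul_mem c (hφ1 v),
      fun h v => by simp [hφ2 h v]⟩

/-- The `G`-equivariant endomorphisms of `c-Ind_K^G σ`. -/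
def endG (ρ : Representation k ↥K V) :
    Submodule k (↥(cInd k K ρ) →ₗ[k] ↥(cInd k K ρ)) where
  carrier := {T | ∀ (g : G) (f : ↥(cInd k K ρ)), T (cIndRep k K ρ g f) = cIndRep k K ρ g (T f)}
  add_mem' := by intro T S hT hS g f; simp [hT g f, hS g f]
  zero_mem' := by intro g f; simp
  smul_mem' := by intro c T hT g f; simp [hT g f]

/-!
Frobenius reciprocity: `T ↦ T ∘ single`, where `single v` is supported on `K` and takes the
value `v` at `1`, identifies `End_G(c-Ind σ)` with `Hom_K(σ, c-Ind σ)`. Its inverse sends `Φ` to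
`f ↦ ∑_{Kg} g⁻¹ · Φ (f g)`: every `f` is the finite sum of the translates `g⁻¹ · single (f g)`
over representatives `g` of the right cosets in its support, and this map sends
`g · single v` to `g · Φ v`, which makes it `G`-equivariant.
As a `K`-module, `c-Ind σ` is the direct sum of the subspaces `σ(t)` obtained by restricting
functions to the double cosets `KtK`; since `σ` is finitely generated, a `K`-map
`σ → c-Ind σ` has only finitely many nonzero components, whence
`Hom_K(σ, c-Ind σ) = ⊕_t Hom_K(σ, σ(t))`.
-/
namespace cInd

open scoped Classical

variable {k K}

theorem exists_out_mk_eq_mul (x : G) :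
    ∃ u : K, (Quotient.mk (QuotientGroup.rightRel K) x).out = u * x := by
  have h := QuotientGroup.rightRel_apply.mp
    (Quotient.exact (Quotient.out_eq (Quotient.mk (QuotientGroup.rightRel K) x)))
  exact ⟨⟨_, K.inv_mem h⟩, by simp⟩

theorem mk_eq_iff_mul_inv_out_mem (c : Quotient (QuotientGroup.rightRel K)) (y : G) :
    Quotient.mk _ y = c ↔ y * c.out⁻¹ ∈ K := by
  conv_lhs => rw [← c.out_eq]
  rw [Quotient.eq, QuotientGroup.rightRel_apply, ← K.inv_mem_iff]
  simp

theorem doubleCosetMk_mul_left (u : K) (x : G) :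
    DoubleCoset.mk K K (u * x) = DoubleCoset.mk K K x :=
  (DoubleCoset.eq K K _ _).mpr ⟨u⁻¹, K.inv_mem u.2, 1, K.one_mem, by group⟩

theorem doubleCosetMk_mul_right (x : G) (u : K) :
    DoubleCoset.mk K K (x * u) = DoubleCoset.mk K K x :=
  (DoubleCoset.eq K K _ _).mpr ⟨1, K.one_mem, u⁻¹, K.inv_mem u.2, by group⟩

variable (ρ : Representation k K V)

theorem apply_out_mk_eq_zero_iff (f : cInd k K ρ) (x : G) :
    (f : G → V) (Quotient.mk (QuotientGroup.rightRel K) x).out = 0 ↔ (f : G → V) x = 0 := by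
  obtain ⟨u, hu⟩ := exists_out_mk_eq_mul (K := K) x
  rw [hu, f.2.1]
  constructor
  · intro h
    rw [← ρ.inv_self_apply u ((f : G → V) x), h, map_zero]
  · intro h
    rw [h, map_zero]

noncomputable def single : V →ₗ[k] cInd k K ρ where
  toFun v := ⟨fun x => if h : x ∈ K then ρ ⟨x, h⟩ v else 0, by
    refine ⟨fun u x => ?_, (Set.finite_singleton (Quotient.mk _ 1)).subset ?_⟩
    · by_cases hx : x ∈ K
      · have hux : (u : G) * x ∈ K := K.mul_mem u.2 hx
        simp only [hux, hx, dif_pos]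
        rw [show (⟨u * x, hux⟩ : K) = u * ⟨x, hx⟩ from rfl, map_mul, Module.End.mul_apply]
      · have hux : (u : G) * x ∉ K := fun h => hx ((K.mul_mem_cancel_left u.2).mp h)
        simp only [hux, hx, dif_neg, not_false_eq_true, map_zero]
    · rintro _ ⟨x, hx, rfl⟩
      have hxK : x ∈ K := by_contra fun h => hx (dif_neg h)
      exact Quotient.sound (QuotientGroup.rightRel_apply.mpr (by simpa using hxK))⟩
  map_add' v w := by ext x; by_cases hx : x ∈ K <;> simp [hx]
  map_smul' a v := by ext x; by_cases hx : x ∈ K <;> simp [hx]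

theorem rep_apply (g : G) (f : cInd k K ρ) (x : G) :
    (cIndRep k K ρ g f : G → V) x = (f : G → V) (x * g) := rfl

theorem single_apply (v : V) (x : G) :
    (single ρ v : G → V) x = if h : x ∈ K then ρ ⟨x, h⟩ v else 0 := rfl

theorem single_apply_mul_inv (f : cInd k K ρ) (g y : G) :
    (single ρ ((f : G → V) g) : G → V) (y * g⁻¹) =
      if y * g⁻¹ ∈ K then (f : G → V) y else 0 := by
  rw [single_apply]
  split_ifs with h
  · rw [← f.2.1 ⟨_, h⟩ g, inv_mul_cancel_right]
  · rfl

theorem single_rho (u : K) (v : V) :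
    single ρ (ρ u v) = cIndRep k K ρ u (single ρ v) := by
  ext x
  change (single ρ (ρ u v) : G → V) x = (single ρ v : G → V) (x * u)
  rw [single_apply, single_apply]
  by_cases hx : x ∈ K
  · have hxu : x * u ∈ K := K.mul_mem hx u.2
    rw [dif_pos hx, dif_pos hxu,
      show (⟨x * u, hxu⟩ : K) = ⟨x, hx⟩ * u from rfl, map_mul, Module.End.mul_apply]
  · rw [dif_neg hx, dif_neg fun h => hx ((K.mul_mem_cancel_right u.2).mp h)]

noncomputable def coeffs :
    cInd k K ρ →ₗ[k] (Quotient (QuotientGroup.rightRel K) →₀ V) where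
  toFun f := Finsupp.ofSupportFinite (fun c => (f : G → V) c.out)
    (f.2.2.subset fun c hc => ⟨c.out, hc, c.out_eq⟩)
  map_add' _ _ := Finsupp.ext fun _ => rfl
  map_smul' _ _ := Finsupp.ext fun _ => rfl

theorem coeffs_apply (f : cInd k K ρ) (c : Quotient (QuotientGroup.rightRel K)) :
    coeffs ρ f c = (f : G → V) c.out := rfl

noncomputable def lift (Φ : V →ₗ[k] cInd k K ρ) : cInd k K ρ →ₗ[k] cInd k K ρ :=
  Finsupp.lsum k (fun c => cIndRep k K ρ c.out⁻¹ ∘ₗ Φ) ∘ₗ coeffs ρ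

theorem comp_lift {M : Type*} [AddCommGroup M] [Module k M] (A : cInd k K ρ →ₗ[k] M)
    (Φ : V →ₗ[k] cInd k K ρ) :
    A ∘ₗ lift ρ Φ =
      Finsupp.lsum k (fun c => A ∘ₗ cIndRep k K ρ c.out⁻¹ ∘ₗ Φ) ∘ₗ coeffs ρ := by
  ext f
  simp only [lift, LinearMap.comp_apply, Finsupp.lsum_apply, map_finsuppSum]
  rfl

theorem lift_single : lift ρ (single ρ) = LinearMap.id := by
  ext f x
  have hterm (c : Quotient (QuotientGroup.rightRel K)) :
      (cIndRep k K ρ c.out⁻¹ (single ρ (coeffs ρ f c)) : G → V) x =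
        if Quotient.mk _ x = c then (f : G → V) x else 0 := by
    rw [rep_apply, coeffs_apply, single_apply_mul_inv]
    simp only [mk_eq_iff_mul_inv_out_mem]
  simp only [lift, LinearMap.coe_comp, Function.comp_apply, Finsupp.lsum_apply, Finsupp.sum,
    Submodule.coe_sum, Finset.sum_apply, LinearMap.id_coe, id_eq, hterm]
  rw [Finset.sum_ite_eq, ite_eq_left_iff, eq_comm]
  intro hx
  rwa [Finsupp.notMem_support_iff, coeffs_apply, apply_out_mk_eq_zero_iff] at hx

def homK : Submodule k (V →ₗ[k] cInd k K ρ) where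
  carrier := {Φ | ∀ (u : K) (v : V), Φ (ρ u v) = cIndRep k K ρ u (Φ v)}
  add_mem' hΦ hΨ u v := by simp [hΦ u v, hΨ u v]
  zero_mem' u v := by simp
  smul_mem' a Φ hΦ u v := by simp [hΦ u v]

theorem comp_single_mem_homK {T : cInd k K ρ →ₗ[k] cInd k K ρ} (hT : T ∈ endG k K ρ) :
    T ∘ₗ single ρ ∈ homK ρ := fun u v => by
  rw [LinearMap.comp_apply, single_rho, hT, LinearMap.comp_apply]

theorem lift_translate_single {Φ : V →ₗ[k] cInd k K ρ} (hΦ : Φ ∈ homK ρ) (g : G)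
    (v : V) :
    lift ρ Φ (cIndRep k K ρ g (single ρ v)) = cIndRep k K ρ g (Φ v) := by
  set c₀ := Quotient.mk (QuotientGroup.rightRel K) g⁻¹
  obtain ⟨u, hu⟩ := exists_out_mk_eq_mul (K := K) g⁻¹
  have hsupp : (coeffs ρ (cIndRep k K ρ g (single ρ v))).support ⊆ {c₀} := by
    intro c hc
    rw [Finsupp.mem_support_iff, coeffs_apply, rep_apply, single_apply] at hc
    have hmem : c.out * g ∈ K := by_contra fun h => hc (dif_neg h)
    refine Finset.mem_singleton.mpr ((mk_eq_iff_mul_inv_out_mem c g⁻¹).mpr ?_).symm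
    simpa using K.inv_mem hmem
  have hval : coeffs ρ (cIndRep k K ρ g (single ρ v)) c₀ = ρ u v := by
    rw [coeffs_apply, rep_apply, hu, inv_mul_cancel_right, single_apply, dif_pos u.2]
  rw [lift, LinearMap.comp_apply, Finsupp.lsum_apply,
    Finsupp.sum_of_support_subset _ hsupp _ (by simp), Finset.sum_singleton, hval,
    LinearMap.comp_apply, hΦ u v, ← Module.End.mul_apply, ← map_mul, hu]
  group

theorem hom_ext {M : Type*} [AddCommGroup M] [Module k M] {A B : cInd k K ρ →ₗ[k] M}
    (h : ∀ g v, A (cIndRep k K ρ g (single ρ v)) = B (cIndRep k K ρ g (single ρ v))) :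
    A = B := by
  rw [← LinearMap.comp_id A, ← LinearMap.comp_id B, ← lift_single, comp_lift, comp_lift]
  congr 2
  exact funext fun c => LinearMap.ext fun v => h _ _

theorem lift_mem_endG {Φ : V →ₗ[k] cInd k K ρ} (hΦ : Φ ∈ homK ρ) :
    lift ρ Φ ∈ endG k K ρ := by
  intro g f
  refine LinearMap.congr_fun (hom_ext ρ (A := lift ρ Φ ∘ₗ cIndRep k K ρ g)
    (B := cIndRep k K ρ g ∘ₗ lift ρ Φ) fun h v => ?_) f
  change lift ρ Φ (cIndRep k K ρ g (cIndRep k K ρ h (single ρ v))) =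
    cIndRep k K ρ g (lift ρ Φ (cIndRep k K ρ h (single ρ v)))
  rw [← Module.End.mul_apply (cIndRep k K ρ g), ← map_mul, lift_translate_single ρ hΦ,
    lift_translate_single ρ hΦ, map_mul, Module.End.mul_apply]

theorem lift_comp_single {Φ : V →ₗ[k] cInd k K ρ} (hΦ : Φ ∈ homK ρ) :
    lift ρ Φ ∘ₗ single ρ = Φ := by
  refine LinearMap.ext fun v => ?_
  simpa using lift_translate_single ρ hΦ 1 v

theorem lift_comp_single_of_mem_endG {T : cInd k K ρ →ₗ[k] cInd k K ρ}
    (hT : T ∈ endG k K ρ) :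
    lift ρ (T ∘ₗ single ρ) = T :=
  calc lift ρ (T ∘ₗ single ρ) = T ∘ₗ lift ρ (single ρ) := by
        rw [comp_lift, lift]
        congr 2
        exact funext fun c => LinearMap.ext fun v => (hT _ _).symm
    _ = T := by rw [lift_single, LinearMap.comp_id]

noncomputable def frobeniusEquiv : endG k K ρ ≃ₗ[k] homK ρ where
  toFun T := ⟨T.1 ∘ₗ single ρ, comp_single_mem_homK ρ T.2⟩
  map_add' _ _ := rfl
  map_smul' _ _ := rfl
  invFun Φ := ⟨lift ρ Φ, lift_mem_endG ρ Φ.2⟩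
  left_inv T := Subtype.ext (lift_comp_single_of_mem_endG ρ T.2)
  right_inv Φ := Subtype.ext (lift_comp_single ρ Φ.2)


noncomputable def proj (q : DoubleCoset.Quotient (K : Set G) K) :
    cInd k K ρ →ₗ[k] cInd k K ρ where
  toFun f := ⟨fun x => if DoubleCoset.mk K K x = q then (f : G → V) x else 0, by
    refine ⟨fun u x => ?_, f.2.2.subset (Set.image_mono fun x hx h0 => hx (by simp [h0]))⟩
    simp only [doubleCosetMk_mul_left]
    split_ifs <;> simp [f.2.1]⟩
  map_add' f g := by ext x; by_cases h : DoubleCoset.mk K K x = q <;> simp [h]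
  map_smul' a f := by ext x; by_cases h : DoubleCoset.mk K K x = q <;> simp [h]

variable {ρ} in
theorem proj_apply (q : DoubleCoset.Quotient (K : Set G) K) (f : cInd k K ρ) (x : G) :
    (proj ρ q f : G → V) x = if DoubleCoset.mk K K x = q then (f : G → V) x else 0 := rfl

theorem proj_mem_dosetPart (q : DoubleCoset.Quotient (K : Set G) K) (f : cInd k K ρ) :
    proj ρ q f ∈ dosetPart k K ρ q := fun _ hx =>
  by_contra fun h => hx (if_neg h)

theorem proj_of_mem_dosetPart {q q' : DoubleCoset.Quotient (K : Set G) K} {f : cInd k K ρ}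
    (hf : f ∈ dosetPart k K ρ q') : proj ρ q f = if q' = q then f else 0 := by
  ext x
  rw [proj_apply]
  by_cases hfx : (f : G → V) x = 0
  · split_ifs <;> simp [hfx]
  · have hx : DoubleCoset.mk K K x = q' := hf x hfx
    subst hx
    split_ifs <;> rfl

theorem proj_translate (q : DoubleCoset.Quotient (K : Set G) K) (u : K) (f : cInd k K ρ) :
    proj ρ q (cIndRep k K ρ u f) = cIndRep k K ρ u (proj ρ q f) := by
  ext x
  simp only [proj_apply, rep_apply, doubleCosetMk_mul_right]

theorem finite_setOf_proj_ne_zero (f : cInd k K ρ) : {q | proj ρ q f ≠ 0}.Finite := by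
  refine ((f.2.2.image fun c => DoubleCoset.mk K K c.out)).subset fun q hq => ?_
  obtain ⟨x, hx⟩ : ∃ x, (proj ρ q f : G → V) x ≠ 0 := by
    by_contra! h
    exact hq (Subtype.ext (funext h))
  rw [proj_apply] at hx
  split_ifs at hx with hxq
  · obtain ⟨u, hu⟩ := exists_out_mk_eq_mul (K := K) x
    exact ⟨_, ⟨x, hx, rfl⟩, by simp only [hu, doubleCosetMk_mul_left, hxq]⟩
  · exact absurd rfl hx

theorem sum_proj (f : cInd k K ρ) (S : Finset (DoubleCoset.Quotient (K : Set G) K))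
    (hS : ∀ q, proj ρ q f ≠ 0 → q ∈ S) : ∑ q ∈ S, proj ρ q f = f := by
  ext x
  simp only [Submodule.coe_sum, Finset.sum_apply, proj_apply]
  rw [Finset.sum_ite_eq, ite_eq_left_iff, eq_comm]
  intro hx
  have hproj : proj ρ (DoubleCoset.mk K K x) f = 0 := not_not.mp (mt (hS _) hx)
  simpa [proj_apply] using congrArg (fun f : cInd k K ρ => (f : G → V) x) hproj

theorem homKPart_le_homK (q : DoubleCoset.Quotient (K : Set G) K) :
    homKPart k K ρ q ≤ homK ρ := fun _ hΦ => hΦ.2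

theorem proj_comp_mem_homKPart {Φ : V →ₗ[k] cInd k K ρ} (hΦ : Φ ∈ homK ρ)
    (q : DoubleCoset.Quotient (K : Set G) K) : proj ρ q ∘ₗ Φ ∈ homKPart k K ρ q :=
  ⟨fun v => proj_mem_dosetPart ρ q (Φ v), fun u v => by
    rw [LinearMap.comp_apply, hΦ u v, proj_translate, LinearMap.comp_apply]⟩

noncomputable def sumHom :
    (DirectSum (DoubleCoset.Quotient (K : Set G) K) fun q => homKPart k K ρ q) →ₗ[k] homK ρ :=
  DirectSum.toModule k _ _ fun q => Submodule.inclusion (homKPart_le_homK ρ q)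

theorem sumHom_of (q : DoubleCoset.Quotient (K : Set G) K) (Φ : homKPart k K ρ q) :
    (sumHom ρ (DirectSum.of _ q Φ) : V →ₗ[k] cInd k K ρ) = Φ := by
  rw [← DirectSum.lof_eq_of k, sumHom, DirectSum.toModule_lof]
  rfl

theorem proj_comp_sumHom
    (Φs : DirectSum (DoubleCoset.Quotient (K : Set G) K) fun q => homKPart k K ρ q)
    (q : DoubleCoset.Quotient (K : Set G) K) :
    proj ρ q ∘ₗ (sumHom ρ Φs : V →ₗ[k] cInd k K ρ) = Φs q := by
  induction Φs using DirectSum.induction_on with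
  | zero => simp
  | of q' Φ =>
    refine LinearMap.ext fun v => ?_
    rw [LinearMap.comp_apply, sumHom_of, proj_of_mem_dosetPart ρ (Φ.2.1 v), DirectSum.of_apply]
    split_ifs with h
    · subst h; rfl
    · rfl
  | add Φs Ψs hΦ hΨ => simp [LinearMap.comp_add, hΦ, hΨ]

theorem sumHom_injective : Function.Injective (sumHom ρ) := fun Φs Ψs h =>
  DirectSum.ext fun q => Subtype.ext (by rw [← proj_comp_sumHom, ← proj_comp_sumHom, h])

theorem finite_setOf_proj_comp_ne_zero [Module.Finite k V] (Φ : V →ₗ[k] cInd k K ρ) :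
    {q | proj ρ q ∘ₗ Φ ≠ 0}.Finite := by
  obtain ⟨s, hs⟩ := Module.Finite.fg_top (R := k) (M := V)
  refine (s.finite_toSet.biUnion fun v _ => finite_setOf_proj_ne_zero ρ (Φ v)).subset
    fun q hq => ?_
  by_contra! h
  simp only [Set.mem_iUnion, Set.mem_ofPred_eq, not_exists, not_not] at h
  exact hq (LinearMap.ext_on hs fun v hv => h v hv)

theorem sumHom_surjective [Module.Finite k V] : Function.Surjective (sumHom ρ) := by
  rintro ⟨Φ, hΦ⟩
  set S := (finite_setOf_proj_comp_ne_zero ρ Φ).toFinset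
  refine ⟨∑ q ∈ S, DirectSum.of _ q ⟨proj ρ q ∘ₗ Φ, proj_comp_mem_homKPart ρ hΦ q⟩,
    Subtype.ext (LinearMap.ext fun v => ?_)⟩
  simp only [map_sum, Submodule.coe_sum, sumHom_of, LinearMap.sum_apply, LinearMap.comp_apply]
  refine sum_proj ρ (Φ v) S fun q hq => ?_
  exact (finite_setOf_proj_comp_ne_zero ρ Φ).mem_toFinset.mpr
    fun h => hq (LinearMap.congr_fun h v)

end cInd

/-- `End_{k[G]}(c-Ind_K^G σ) ≅ ⊕_{t ∈ K\G/K} Hom_{k[K]}(σ, σ(t))` as `k`-vector spaces. -/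
theorem stmt16 {k : Type} [Field k] {G : Type} [Group G] (K : Subgroup G)
    {V : Type} [AddCommGroup V] [Module k V] [FiniteDimensional k V]
    (ρ : Representation k ↥K V) :
    Nonempty (↥(endG k K ρ) ≃ₗ[k]
      DirectSum (DoubleCoset.Quotient (↑K : Set G) ↑K) (fun q => ↥(homKPart k K ρ q))) := by
  exact ⟨(cInd.frobeniusEquiv ρ).trans (LinearEquiv.ofBijective (cInd.sumHom ρ)
    ⟨cInd.sumHom_injective ρ, cInd.sumHom_surjective ρ⟩).symm⟩
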